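/- arXiv:1605.08180 — 3 statements merged into one kernel-verified Lean document; each statement's English description precedes it below -/
import Mathlib

section
/- Let (P(t))_{t≥0} satisfy: positive diagonals, |P(t)| row-stochastic, nonzero entries bounded below in modulus by γ > 0. Assume there is an infinite sequence of uniformly bounded intervals [t_i,t_{i+1}) such that over each interval the union of the graphs contains a directed spanning tree, and for the root vertex set of the union graph over that interval there is no bipartition into two subsets (one possibly empty) making all between-subset edges negative and all within-subset edges positive in every graph G(P(s)), s ∈ [t_i,t_{i+1}). Then every solution of x(t+1) = P(t)x(t) converges to zero. -/
open Matrix Filter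

def traj {N : ℕ} (P : ℕ → Matrix (Fin N) (Fin N) ℝ) (x0 : Fin N → ℝ) :
    ℕ → Fin N → ℝ
  | 0 => x0
  | t + 1 => P t *ᵥ traj P x0 t

/-- Reachability in the union of the graphs `G(P(s))` for `s ∈ [a, b)`:
edge `j → i` whenever `p_ij(s) ≠ 0` for some `s` in the interval. -/
def IntervalReach {N : ℕ} (P : ℕ → Matrix (Fin N) (Fin N) ℝ) (a b : ℕ) :
    Fin N → Fin N → Prop :=
  Relation.ReflTransGen (fun j i => ∃ s, a ≤ s ∧ s < b ∧ i ≠ j ∧ P s i j ≠ 0)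

/-!
Lift the signed system to `Fin N × Bool`: `y (i, true) = x i` and `y (i, false) = -x i` evolve
by the nonnegative stochastic matrix `Q = [[P⁺, P⁻], [P⁻, P⁺]]`, and `max y = ‖x‖` (sup norm).
Over each interval the lifted union graph is rooted at `(r, true)` for a root `r` of the union
graph: if `(r, true)` could not reach `(r, false)`, the sign with which it reaches each root would
be a forbidden bipartition, and the symmetry `(i, σ) ↦ (i, !σ)` does the rest. A composition of
`(2N)²` rooted graphs with self-loops has a vertex `ρ` reaching every vertex, and by the symmetry
`y ρ ≤ 0` at the start of the window. Every step keeps a weight `≥ γ` on its source, so along the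
walks out of `ρ` the gap `max y - y` decays at most geometrically; hence `‖x‖` shrinks by the
factor `1 - γ ^ ((2N)² B)` over every `(2N)²` consecutive intervals.
-/

open Relation

section CompReach

variable {V : Type*} (H : ℕ → V → V → Prop)

/-- A walk from `v` to `w` taking one step, an edge or a pause, in each of the graphs
`H (j - 1), …, H 1, H 0`, in this order. -/
def CompReach : ℕ → V → V → Prop
  | 0 => Eq
  | j + 1 => fun v w => ∃ u, (v = u ∨ H j v u) ∧ CompReach j u w

variable {H}

lemma compReach_refl : ∀ (j : ℕ) (v : V), CompReach H j v v
  | 0, _ => rfl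
  | j + 1, v => ⟨v, Or.inl rfl, compReach_refl j v⟩

lemma CompReach.succ {j : ℕ} {v w : V} (h : CompReach H j v w) : CompReach H (j + 1) v w :=
  ⟨v, Or.inl rfl, h⟩

lemma CompReach.mono {j k : ℕ} {v w : V} (h : CompReach H j v w) (hjk : j ≤ k) :
    CompReach H k v w := by
  induction k, hjk using Nat.le_induction with
  | base => exact h
  | succ k _ ih => exact ih.succ

lemma CompReach.map (f : V → V) (hf : ∀ j v u, H j v u → H j (f v) (f u)) :
    ∀ {j : ℕ} {v w : V}, CompReach H j v w → CompReach H j (f v) (f w)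
  | 0, _, _, h => congrArg f h
  | j + 1, _, _, ⟨u, hvu, huw⟩ => ⟨f u, hvu.imp (congrArg f) (hf j _ _), huw.map f hf⟩

lemma CompReach.propagate {S : ℕ → V → Prop} {m : ℕ}
    (hS : ∀ j < m, ∀ v u, (v = u ∨ H j v u) → S (j + 1) v → S j u) :
    ∀ {j : ℕ} {v w : V}, j ≤ m → CompReach H j v w → S j v → S 0 w
  | 0, _, _, _, rfl, hv => hv
  | j + 1, v, _, hj, ⟨u, hvu, huw⟩, hv =>
    huw.propagate hS (Nat.le_of_succ_le hj) (hS j hj v u hvu hv)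

lemma mem_of_reflTransGen {R : V → V → Prop} {S : Set V} (hS : ∀ a b, R a b → b ∈ S → a ∈ S)
    {a b : V} (hab : ReflTransGen R a b) (hb : b ∈ S) : a ∈ S := by
  induction hab using ReflTransGen.head_induction_on with
  | refl => exact hb
  | head hac _ ih => exact hS _ _ hac ih

/-- The ancestor sets `{v | CompReach H j v w}` grow with `j` and their sizes add up to at most
`|V|²`, so for some `j < |V|²` none of them grows: each is then closed under predecessors in
`H j` and contains the root of `H j`. -/
theorem exists_forall_compReach [Fintype V] [Nonempty V]
    (hroot : ∀ j < Fintype.card V ^ 2, ∃ r, ∀ u, ReflTransGen (H j) r u) :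
    ∃ ρ, ∀ w, CompReach H (Fintype.card V ^ 2) ρ w := by
  classical
  set m := Fintype.card V ^ 2
  let pairs : ℕ → Finset (V × V) := fun j => Finset.univ.filter fun p => CompReach H j p.1 p.2
  have hsub : ∀ j, pairs j ⊆ pairs (j + 1) := fun j p hp => by
    simp only [pairs, Finset.mem_filter, Finset.mem_univ, true_and] at hp ⊢
    exact hp.succ
  obtain ⟨j, hjm, hstable⟩ : ∃ j < m, pairs (j + 1) ⊆ pairs j := by
    by_contra! hgrow
    have hcard : ∀ j ≤ m, j + 1 ≤ (pairs j).card := by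
      intro j hj
      induction j with
      | zero =>
        obtain ⟨v⟩ := ‹Nonempty V›
        exact Finset.card_pos.2 ⟨(v, v), by simp [pairs, compReach_refl]⟩
      | succ j ih =>
        have := Finset.card_lt_card ⟨hsub j, hgrow j hj⟩
        have := ih (by omega)
        omega
    have := (hcard m le_rfl).trans (Finset.card_le_univ _)
    simp [Fintype.card_prod, m, sq] at this
  obtain ⟨r, hr⟩ := hroot j hjm
  refine ⟨r, fun w => CompReach.mono ?_ hjm.le⟩
  refine mem_of_reflTransGen (S := {v | CompReach H j v w}) (fun a b hab hb => ?_) (hr w)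
    (compReach_refl j w)
  have : (a, w) ∈ pairs (j + 1) := by
    simpa [pairs] using ⟨b, Or.inr hab, hb⟩
  simpa [pairs] using hstable this

end CompReach

section SignedLift

variable {ι : Type*}

def liftVec (x : ι → ℝ) (u : ι × Bool) : ℝ := if u.2 then x u.1 else -x u.1

/-- The graph of `[[A⁺, A⁻], [A⁻, A⁺]]`, the nonnegative matrix that moves `liftVec x` to
`liftVec (A *ᵥ x)`. -/
def LiftAdj (A : Matrix ι ι ℝ) (v u : ι × Bool) : Prop :=
  A u.1 v.1 ≠ 0 ∧ (u.2 = v.2 ↔ 0 < A u.1 v.1)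

def LiftUnionAdj (P : ℕ → Matrix ι ι ℝ) (a b : ℕ) (v u : ι × Bool) : Prop :=
  ∃ s, a ≤ s ∧ s < b ∧ LiftAdj (P s) v u

def liftNeg (u : ι × Bool) : ι × Bool := (u.1, !u.2)

@[simp]
lemma liftNeg_liftNeg (u : ι × Bool) : liftNeg (liftNeg u) = u := by
  simp [liftNeg]

lemma liftVec_liftNeg (x : ι → ℝ) (u : ι × Bool) : liftVec x (liftNeg u) = -liftVec x u := by
  obtain ⟨i, σ⟩ := u
  cases σ <;> simp [liftVec, liftNeg]

lemma liftVec_le_abs (x : ι → ℝ) (u : ι × Bool) : liftVec x u ≤ |x u.1| := by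
  unfold liftVec
  split_ifs
  exacts [le_abs_self _, neg_le_abs _]

lemma norm_le_of_forall_liftVec_le [Fintype ι] [Nonempty ι] {x : ι → ℝ} {c : ℝ}
    (h : ∀ u, liftVec x u ≤ c) : ‖x‖ ≤ c :=
  (pi_norm_le_iff_of_nonempty x).2 fun i => by
    have hpos := h (i, true)
    have hneg := h (i, false)
    simp only [liftVec, if_true, Bool.false_eq_true, if_false] at hpos hneg
    exact abs_le.2 ⟨by linarith, hpos⟩

lemma liftAdj_self {A : Matrix ι ι ℝ} {i : ι} (h : 0 < A i i) (σ : Bool) :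
    LiftAdj A (i, σ) (i, σ) :=
  ⟨h.ne', by simp [h]⟩

lemma liftAdj_of_ne_zero {A : Matrix ι ι ℝ} {i j : ι} (h : A i j ≠ 0) (σ : Bool) :
    LiftAdj A (j, σ) (i, if 0 < A i j then σ else !σ) := by
  refine ⟨h, ?_⟩
  by_cases hpos : 0 < A i j <;> simp [hpos]

lemma LiftAdj.liftNeg {A : Matrix ι ι ℝ} {v u : ι × Bool} (h : LiftAdj A v u) :
    LiftAdj A (liftNeg v) (liftNeg u) := by
  simpa [LiftAdj, _root_.liftNeg] using h

lemma LiftAdj.liftVec_mul {A : Matrix ι ι ℝ} {x : ι → ℝ} {i k : ι} {σ τ : Bool}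
    (h : LiftAdj A (k, σ) (i, τ)) :
    liftVec (fun j => A i j * x j) (k, τ) = |A i k| * liftVec x (k, σ) := by
  obtain ⟨hne, hsign⟩ := h
  rcases hne.lt_or_gt with hneg | hpos
  · obtain rfl : τ = !σ := by cases τ <;> cases σ <;> simp_all [hneg.not_gt]
    rw [abs_of_neg hneg]
    cases σ <;> simp [liftVec]
  · obtain rfl : τ = σ := hsign.2 hpos
    rw [abs_of_pos hpos]
    cases τ <;> simp [liftVec]

lemma LiftUnionAdj.liftNeg {P : ℕ → Matrix ι ι ℝ} {a b : ℕ} {v u : ι × Bool}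
    (h : LiftUnionAdj P a b v u) : LiftUnionAdj P a b (liftNeg v) (liftNeg u) :=
  let ⟨s, has, hsb, hs⟩ := h
  ⟨s, has, hsb, hs.liftNeg⟩

lemma reflTransGen_liftUnionAdj_liftNeg {P : ℕ → Matrix ι ι ℝ} {a b : ℕ} {v u : ι × Bool}
    (h : ReflTransGen (LiftUnionAdj P a b) v u) :
    ReflTransGen (LiftUnionAdj P a b) (liftNeg v) (liftNeg u) :=
  ReflTransGen.lift liftNeg (fun _ _ hvu => LiftUnionAdj.liftNeg hvu) v u h

end SignedLift

section RootedLift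

variable {N : ℕ} {P : ℕ → Matrix (Fin N) (Fin N) ℝ} {a b : ℕ}

def IsBalancedOnRoots (P : ℕ → Matrix (Fin N) (Fin N) ℝ) (a b : ℕ) (f : Fin N → Bool) : Prop :=
  ∀ s, a ≤ s → s < b → ∀ i j : Fin N,
    (∀ w, IntervalReach P a b i w) → (∀ w, IntervalReach P a b j w) →
    i ≠ j → P s i j ≠ 0 → (f i = f j ↔ 0 < P s i j)

lemma exists_reflTransGen_liftUnionAdj {i j : Fin N} (h : IntervalReach P a b i j) (σ : Bool) :
    ∃ τ, ReflTransGen (LiftUnionAdj P a b) (i, σ) (j, τ) := by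
  induction h with
  | refl => exact ⟨σ, .refl⟩
  | tail _ hstep ih =>
    obtain ⟨s, has, hsb, -, hs⟩ := hstep
    obtain ⟨τ, hτ⟩ := ih
    exact ⟨_, hτ.tail ⟨s, has, hsb, liftAdj_of_ne_zero hs τ⟩⟩

lemma exists_isBalancedOnRoots {r : Fin N} (hr : ∀ w, IntervalReach P a b r w)
    (hflip : ¬ ReflTransGen (LiftUnionAdj P a b) (r, true) (r, false)) :
    ∃ f, IsBalancedOnRoots P a b f := by
  classical
  set R := ReflTransGen (LiftUnionAdj P a b)
  have hsign : ∀ i, (∀ w, IntervalReach P a b i w) →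
      ∀ τ, R (r, true) (i, τ) → decide (R (r, true) (i, true)) = τ := by
    intro i hi τ hτ
    obtain ⟨δ, hδ⟩ := exists_reflTransGen_liftUnionAdj (hi r) τ
    have hδ' : R (i, !τ) (r, !δ) := reflTransGen_liftUnionAdj_liftNeg hδ
    have hnot : ¬ R (r, true) (i, !τ) := fun h' => by
      cases δ
      · exact hflip (hτ.trans hδ)
      · exact hflip (h'.trans hδ')
    cases τ
    · simpa using hnot
    · simpa using hτ
  refine ⟨fun i => decide (R (r, true) (i, true)), fun s has hsb i j hi hj _ hP => ?_⟩
  obtain ⟨τ, hτ⟩ := exists_reflTransGen_liftUnionAdj (hr j) true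
  dsimp only
  rw [hsign i hi _ (hτ.tail ⟨s, has, hsb, liftAdj_of_ne_zero hP τ⟩), hsign j hj τ hτ]
  by_cases hpos : 0 < P s i j <;> simp [hpos]

lemma reflTransGen_liftUnionAdj_of_not_balanced {r : Fin N}
    (hr : ∀ w, IntervalReach P a b r w) (hbal : ¬ ∃ f, IsBalancedOnRoots P a b f) :
    ∀ u, ReflTransGen (LiftUnionAdj P a b) (r, true) u := by
  have hflip : ReflTransGen (LiftUnionAdj P a b) (r, true) (r, false) := by
    by_contra h
    exact hbal (exists_isBalancedOnRoots hr h)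
  rintro ⟨w, σ⟩
  obtain ⟨τ, hτ⟩ := exists_reflTransGen_liftUnionAdj (hr w) true
  have hτ' := hflip.trans (reflTransGen_liftUnionAdj_liftNeg hτ)
  cases σ <;> cases τ <;> first | exact hτ | exact hτ'

end RootedLift

section Contraction

lemma norm_mulVec_le {m n : Type*} [Fintype m] [Fintype n] (A : Matrix m n ℝ)
    (hA : ∀ i, ∑ j, |A i j| ≤ 1) (x : n → ℝ) : ‖A *ᵥ x‖ ≤ ‖x‖ := by
  refine (pi_norm_le_iff_of_nonneg (norm_nonneg x)).2 fun i => ?_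
  calc ‖(A *ᵥ x) i‖ = |∑ j, A i j * x j| := rfl
    _ ≤ ∑ j, |A i j| * ‖x‖ := (Finset.abs_sum_le_sum_abs _ _).trans <|
        Finset.sum_le_sum fun j _ => by
          rw [abs_mul]
          exact mul_le_mul_of_nonneg_left (norm_le_pi_norm x j) (abs_nonneg _)
    _ ≤ ‖x‖ := by
        rw [← Finset.sum_mul]
        exact mul_le_of_le_one_left (norm_nonneg x) (hA i)

lemma liftVec_mulVec_le {ι : Type*} [Fintype ι] {A : Matrix ι ι ℝ} {x : ι → ℝ} {M : ℝ}
    {v u : ι × Bool} (hrow : ∑ j, |A u.1 j| = 1) (hvu : LiftAdj A v u) (hx : ‖x‖ ≤ M) :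
    liftVec (A *ᵥ x) u ≤ M - |A u.1 v.1| * (M - liftVec x v) := by
  obtain ⟨i, τ⟩ := u
  obtain ⟨k, σ⟩ := v
  set y : ι → ℝ := fun j => A i j * x j
  have hsum : M - liftVec (A *ᵥ x) (i, τ) = ∑ j, (|A i j| * M - liftVec y (j, τ)) := by
    rw [Finset.sum_sub_distrib, ← Finset.sum_mul, hrow, one_mul]
    cases τ <;> simp [liftVec, y, mulVec, dotProduct]
  have hterm : ∀ j, liftVec y (j, τ) ≤ |A i j| * M := fun j =>
    (liftVec_le_abs y (j, τ)).trans <| by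
      rw [abs_mul]
      exact mul_le_mul_of_nonneg_left ((norm_le_pi_norm x j).trans hx) (abs_nonneg _)
  have hk := Finset.single_le_sum (f := fun j => |A i j| * M - liftVec y (j, τ))
    (fun j _ => sub_nonneg.2 (hterm j)) (Finset.mem_univ k)
  rw [hvu.liftVec_mul] at hk
  dsimp only
  linarith

variable {N : ℕ} {P : ℕ → Matrix (Fin N) (Fin N) ℝ} {γ : ℝ}

lemma norm_traj_antitone (habs : ∀ t i, ∑ j, |P t i j| = 1) (x0 : Fin N → ℝ) :
    Antitone fun t => ‖traj P x0 t‖ :=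
  antitone_nat_of_succ_le fun t => norm_mulVec_le _ (fun i => (habs t i).le) _

lemma liftVec_traj_succ_le (hγ : 0 ≤ γ) (habs : ∀ t i, ∑ j, |P t i j| = 1)
    (hlow : ∀ t i j, P t i j ≠ 0 → γ ≤ |P t i j|) {x0 : Fin N → ℝ} {t : ℕ} {M c : ℝ}
    (hc : 0 ≤ c) (hM : ‖traj P x0 t‖ ≤ M) {v u : Fin N × Bool} (hvu : LiftAdj (P t) v u)
    (hv : liftVec (traj P x0 t) v ≤ M - γ ^ t * c) :
    liftVec (traj P x0 (t + 1)) u ≤ M - γ ^ (t + 1) * c := by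
  have hgap : γ ^ t * c ≤ M - liftVec (traj P x0 t) v := by linarith
  calc liftVec (traj P x0 (t + 1)) u
      ≤ M - |P t u.1 v.1| * (M - liftVec (traj P x0 t) v) :=
        liftVec_mulVec_le (habs t u.1) hvu hM
    _ ≤ M - γ * (γ ^ t * c) :=
        sub_le_sub_left (mul_le_mul (hlow t _ _ hvu.1) hgap (by positivity) (abs_nonneg _)) M
    _ = M - γ ^ (t + 1) * c := by ring

lemma liftVec_traj_le_of_liftUnionAdj (hγ : 0 ≤ γ) (habs : ∀ t i, ∑ j, |P t i j| = 1)
    (hdiag : ∀ t i, 0 < P t i i) (hlow : ∀ t i j, P t i j ≠ 0 → γ ≤ |P t i j|)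
    {x0 : Fin N → ℝ} {p q : ℕ} {M c : ℝ} (hc : 0 ≤ c) (hpq : p ≤ q) (hM : ‖traj P x0 p‖ ≤ M)
    {v u : Fin N × Bool} (hvu : v = u ∨ LiftUnionAdj P p q v u)
    (hv : liftVec (traj P x0 p) v ≤ M - γ ^ p * c) :
    liftVec (traj P x0 q) u ≤ M - γ ^ q * c := by
  have hM' : ∀ {s}, p ≤ s → ‖traj P x0 s‖ ≤ M := fun hs =>
    (norm_traj_antitone habs x0 hs).trans hM
  have stay : ∀ {s s'} (w : Fin N × Bool), p ≤ s → s ≤ s' →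
      liftVec (traj P x0 s) w ≤ M - γ ^ s * c → liftVec (traj P x0 s') w ≤ M - γ ^ s' * c := by
    intro s s' w hps hss' hw
    induction s', hss' using Nat.le_induction with
    | base => exact hw
    | succ s' hs' ih =>
      exact liftVec_traj_succ_le hγ habs hlow hc (hM' (hps.trans hs'))
        (liftAdj_self (hdiag s' w.1) w.2) ih
  rcases hvu with rfl | ⟨s, hps, hsq, hs⟩
  · exact stay v le_rfl hpq hv
  · exact stay u (by omega) hsq
      (liftVec_traj_succ_le hγ habs hlow hc (hM' hps) hs (stay v le_rfl hps hv))

theorem norm_traj_le_of_forall_compReach (hγ : 0 < γ) (habs : ∀ t i, ∑ j, |P t i j| = 1)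
    (hdiag : ∀ t i, 0 < P t i i) (hlow : ∀ t i j, P t i j ≠ 0 → γ ≤ |P t i j|)
    (x0 : Fin N → ℝ) {τ : ℕ → ℕ} (hτ : Antitone τ) {m : ℕ} {ρ : Fin N × Bool}
    (hρ : ∀ w, CompReach (fun j => LiftUnionAdj P (τ (j + 1)) (τ j)) m ρ w) :
    ‖traj P x0 (τ 0)‖ ≤ (1 - γ ^ (τ 0 - τ m)) * ‖traj P x0 (τ m)‖ := by
  set X := traj P x0
  set M := ‖X (τ m)‖
  set H := fun j => LiftUnionAdj P (τ (j + 1)) (τ j)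
  have : Nonempty (Fin N) := ⟨ρ.1⟩
  obtain ⟨ρ', hρ', hρ'0⟩ : ∃ ρ', (∀ w, CompReach H m ρ' w) ∧ liftVec (X (τ m)) ρ' ≤ 0 := by
    by_cases h : liftVec (X (τ m)) ρ ≤ 0
    · exact ⟨ρ, hρ, h⟩
    · refine ⟨liftNeg ρ, fun w => ?_, by rw [liftVec_liftNeg]; linarith⟩
      simpa using (hρ (liftNeg w)).map liftNeg fun _ _ _ h => h.liftNeg
  have hγm : γ ^ τ m ≠ 0 := pow_ne_zero _ hγ.ne'
  -- so that at time `τ m` the invariant `liftVec (X t) v ≤ M - γ ^ t * c` reads `≤ 0`, true at `ρ'`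
  set c := M / γ ^ τ m
  have hc : 0 ≤ c := by positivity
  have hsmall : ∀ w, liftVec (X (τ 0)) w ≤ M - γ ^ τ 0 * c := fun w =>
    (hρ' w).propagate (S := fun j v => liftVec (X (τ j)) v ≤ M - γ ^ τ j * c)
      (fun j hj _ _ hvu hv => liftVec_traj_le_of_liftUnionAdj hγ.le habs hdiag hlow hc
        (hτ (Nat.le_succ j)) (norm_traj_antitone habs x0 (hτ hj)) hvu hv)
      le_rfl (by rw [mul_div_cancel₀ _ hγm]; linarith)
  have hexp : γ ^ τ 0 * c = γ ^ (τ 0 - τ m) * M := by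
    rw [pow_sub₀ _ hγ.ne' (hτ (Nat.zero_le m))]
    simp only [c, div_eq_mul_inv]
    ring
  refine norm_le_of_forall_liftVec_le fun w => ?_
  linarith [hsmall w]

lemma sub_le_mul_of_forall_succ_sub_le {f : ℕ → ℕ} (hf : Monotone f) {B : ℕ}
    (hB : ∀ k, f (k + 1) - f k ≤ B) (k l : ℕ) : f (k + l) - f k ≤ l * B := by
  induction l with
  | zero => simp
  | succ l ih =>
    have h1 := hB (k + l)
    have h2 : f k ≤ f (k + l) := hf (Nat.le_add_right k l)
    have h3 : f (k + l) ≤ f (k + l + 1) := hf (Nat.le_succ _)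
    rw [Nat.succ_mul, ← add_assoc]
    omega

theorem norm_traj_contraction (hγ : 0 < γ) (hγ1 : γ ≤ 1) (habs : ∀ t i, ∑ j, |P t i j| = 1)
    (hdiag : ∀ t i, 0 < P t i i) (hlow : ∀ t i j, P t i j ≠ 0 → γ ≤ |P t i j|)
    {ts : ℕ → ℕ} {B : ℕ} (hmono : Monotone ts) (hbdd : ∀ k, ts (k + 1) - ts k ≤ B)
    (htree : ∀ k, ∃ v : Fin N, ∀ w, IntervalReach P (ts k) (ts (k + 1)) v w)
    (hnobal : ∀ k, ¬ ∃ f, IsBalancedOnRoots P (ts k) (ts (k + 1)) f)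
    (x0 : Fin N → ℝ) (k : ℕ) :
    ‖traj P x0 (ts (k + (2 * N) ^ 2))‖ ≤
      (1 - γ ^ ((2 * N) ^ 2 * B)) * ‖traj P x0 (ts k)‖ := by
  set m := (2 * N) ^ 2
  have hcard : Fintype.card (Fin N × Bool) ^ 2 = m := by simp [m, mul_comm]
  obtain ⟨i, -⟩ := htree 0
  have : Nonempty (Fin N × Bool) := ⟨(i, true)⟩
  set τ : ℕ → ℕ := fun j => ts (k + m - j)
  have hτ : Antitone τ := fun _ _ h => hmono (by omega)
  obtain ⟨ρ, hρ⟩ := exists_forall_compReach (H := fun j => LiftUnionAdj P (τ (j + 1)) (τ j))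
    fun j hj => by
      obtain ⟨r, hr⟩ := htree (k + m - (j + 1))
      have hk : k + m - j = k + m - (j + 1) + 1 := by omega
      exact ⟨(r, true), by
        simpa only [τ, hk] using reflTransGen_liftUnionAdj_of_not_balanced hr (hnobal _)⟩
  rw [hcard] at hρ
  have hwindow := norm_traj_le_of_forall_compReach hγ habs hdiag hlow x0 hτ hρ
  simp only [τ, Nat.sub_zero, Nat.add_sub_cancel] at hwindow
  have hlen := sub_le_mul_of_forall_succ_sub_le hmono hbdd k m
  refine hwindow.trans (mul_le_mul_of_nonneg_right ?_ (norm_nonneg _))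
  linarith [pow_le_pow_of_le_one hγ.le hγ1 hlen]

end Contraction

lemma tendsto_zero_of_antitone_of_le_mul {f : ℕ → ℝ} (hf : Antitone f) (hf0 : ∀ t, 0 ≤ f t)
    {s : ℕ → ℕ} (hs : Tendsto s atTop atTop) {θ : ℝ} (hθ0 : 0 ≤ θ) (hθ1 : θ < 1)
    (h : ∀ n, f (s (n + 1)) ≤ θ * f (s n)) : Tendsto f atTop (nhds 0) := by
  have hgeo : ∀ n, f (s n) ≤ θ ^ n * f (s 0) := by
    intro n
    induction n with
    | zero => simp
    | succ n ih =>
      calc f (s (n + 1)) ≤ θ * f (s n) := h n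
        _ ≤ θ * (θ ^ n * f (s 0)) := mul_le_mul_of_nonneg_left ih hθ0
        _ = θ ^ (n + 1) * f (s 0) := by ring
  have hsub : Tendsto (f ∘ s) atTop (nhds 0) :=
    squeeze_zero (fun n => hf0 _) hgeo <| by
      simpa using (tendsto_pow_atTop_nhds_zero_of_lt_one hθ0 hθ1).mul_const (f (s 0))
  have hlim := tendsto_atTop_ciInf hf ⟨0, Set.forall_mem_range.2 hf0⟩
  rwa [tendsto_nhds_unique (hlim.comp hs) hsub] at hlim

theorem stmt15_general {N : ℕ} (P : ℕ → Matrix (Fin N) (Fin N) ℝ) (γ : ℝ) (hγ : 0 < γ)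
    (habs : ∀ t i, ∑ j, |P t i j| = 1) (hdiag : ∀ t i, 0 < P t i i)
    (hlow : ∀ t i j, P t i j ≠ 0 → γ ≤ |P t i j|)
    (ts : ℕ → ℕ) (B : ℕ) (hmono : ∀ k, ts k < ts (k + 1))
    (hbdd : ∀ k, ts (k + 1) - ts k ≤ B)
    -- over each interval the union graph contains a directed spanning tree
    (htree : ∀ k, ∃ v : Fin N, ∀ w, IntervalReach P (ts k) (ts (k + 1)) v w)
    -- and no bipartition of the root vertex set of the union graph (one part
    -- possibly empty) works simultaneously for all graphs of the interval
    (hnobal : ∀ k, ¬ ∃ f : Fin N → Bool, ∀ s, ts k ≤ s → s < ts (k + 1) →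
      ∀ i j : Fin N,
        (∀ w, IntervalReach P (ts k) (ts (k + 1)) i w) →
        (∀ w, IntervalReach P (ts k) (ts (k + 1)) j w) →
        i ≠ j → P s i j ≠ 0 → (f i = f j ↔ 0 < P s i j)) :
    ∀ x0 : Fin N → ℝ, Tendsto (fun t => traj P x0 t) atTop (nhds 0) := by
  intro x0
  obtain ⟨i, -⟩ := htree 0
  have hγ1 : γ ≤ 1 := (hlow 0 i i (hdiag 0 i).ne').trans <|
    (Finset.single_le_sum (fun j _ => abs_nonneg (P 0 i j)) (Finset.mem_univ i)).trans
      (habs 0 i).le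
  have hm : 0 < (2 * N) ^ 2 := by have := i.pos; positivity
  have hts := strictMono_nat_of_lt_succ hmono
  have hcontr := norm_traj_contraction hγ hγ1 habs hdiag hlow hts.monotone hbdd htree hnobal x0
  rw [tendsto_zero_iff_norm_tendsto_zero]
  refine tendsto_zero_of_antitone_of_le_mul (norm_traj_antitone habs x0)
    (fun _ => norm_nonneg _) (hts.comp (strictMono_mul_right_of_pos hm)).tendsto_atTop
    (sub_nonneg.2 (pow_le_one₀ hγ.le hγ1)) (sub_lt_self 1 (pow_pos hγ ((2 * N) ^ 2 * B)))
    fun n => ?_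
  simpa only [Function.comp, add_one_mul] using hcontr (n * (2 * N) ^ 2)

theorem stmt15 {N : ℕ} (P : ℕ → Matrix (Fin N) (Fin N) ℝ) (γ : ℝ) (hγ : 0 < γ)
    (habs : ∀ t i, ∑ j, |P t i j| = 1) (hdiag : ∀ t i, 0 < P t i i)
    (hlow : ∀ t i j, P t i j ≠ 0 → γ ≤ |P t i j|)
    (ts : ℕ → ℕ) (B : ℕ) (hts0 : ts 0 = 0) (hmono : ∀ k, ts k < ts (k + 1))
    (hbdd : ∀ k, ts (k + 1) - ts k ≤ B)
    -- over each interval the union graph contains a directed spanning tree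
    (htree : ∀ k, ∃ v : Fin N, ∀ w, IntervalReach P (ts k) (ts (k + 1)) v w)
    -- and no bipartition of the root vertex set of the union graph (one part
    -- possibly empty) works simultaneously for all graphs of the interval
    (hnobal : ∀ k, ¬ ∃ f : Fin N → Bool, ∀ s, ts k ≤ s → s < ts (k + 1) →
      ∀ i j : Fin N,
        (∀ w, IntervalReach P (ts k) (ts (k + 1)) i w) →
        (∀ w, IntervalReach P (ts k) (ts (k + 1)) j w) →
        i ≠ j → P s i j ≠ 0 → (f i = f j ↔ 0 < P s i j)) :
    ∀ x0 : Fin N → ℝ, Tendsto (fun t => traj P x0 t) atTop (nhds 0) :=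
  stmt15_general P γ hγ habs hdiag hlow ts B hmono hbdd htree hnobal
end

section
/- Let L be the signed Laplacian of a fixed signed graph G(L) containing a directed spanning tree, written in block form L = [[L₁₁, 0],[L₂₁, L₂₂]] with L₁₁ ∈ ℝ^{r×r} irreducible. If the subgraph G(L₁₁) is structurally unbalanced, then every solution of ẋ = −Lx converges to the zero vector. -/
open Matrix Filter

def StronglyConnected {α : Type*} (adj : α → α → Prop) : Prop :=
  ∀ a b, Relation.ReflTransGen adj a b

/-!
By Gershgorin's theorem every eigenvalue `μ` of a signed Laplacian lies in a disc
`|μ - l_kk| ≤ l_kk`, so `μ = 0` or `Re μ > 0`. A nonzero real kernel vector `v` is ruled out: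
in row `i` of `L v = 0`, at a vertex `i` where `|v|` is maximal, the triangle inequality is an
equality, so `v_j = sgn(a_ij) v_i` and `|v_j|` is again maximal for every neighbour `j ∈ N_i`.
Following the spanning tree back from a maximal vertex to its root and then using the strong
connectivity of `G(L₁₁)`, `|v|` is maximal, hence nonzero, on the whole root block, and the sign
of `v` is then a structural balance of `G(L₁₁)`.

So all eigenvalues have positive real part. A solution of `ẋ = -L x` is `exp (-t L) x(0)`,
and on each generalized eigenspace `exp (-t L)` acts as `e^{-tμ}` times a polynomial in `t`.
-/

open Finset Topology NormedSpace

section Exponential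

theorem exp_apply_eq_sum_of_pow_apply_eq_zero {𝕜 E : Type*} [RCLike 𝕜] [NormedAddCommGroup E]
    [NormedSpace 𝕜 E] [CompleteSpace E] (X : E →L[𝕜] E) {k : ℕ} {w : E}
    (hw : (X ^ k) w = 0) :
    exp X w = ∑ j ∈ range k, (j.factorial : 𝕜)⁻¹ • (X ^ j) w := by
  refine ((exp_series_hasSum_exp' (𝕂 := 𝕜) X).mapL (ContinuousLinearMap.apply 𝕜 E w)).unique
    (hasSum_sum_of_ne_finset_zero fun j hj => ?_)
  rw [mem_range, not_lt] at hj
  rw [ContinuousLinearMap.apply_apply, _root_.smul_apply, ← Nat.sub_add_cancel hj,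
    pow_add, mul_apply_eq_comp, hw, map_zero, smul_zero]

theorem tendsto_pow_mul_cexp_neg_mul_atTop_nhds_zero {μ : ℂ} (hμ : 0 < μ.re) (j : ℕ) :
    Tendsto (fun t : ℝ => (t : ℂ) ^ j * Complex.exp (-(t * μ))) atTop (𝓝 0) := by
  rw [tendsto_zero_iff_norm_tendsto_zero]
  refine (tendsto_rpow_mul_exp_neg_mul_atTop_nhds_zero j μ.re hμ).congr' ?_
  filter_upwards [eventually_ge_atTop 0] with t ht
  simp [Complex.norm_exp, abs_of_nonneg ht, mul_comm]

variable {E : Type*} [NormedAddCommGroup E] [NormedSpace ℂ E] [CompleteSpace E]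

theorem exp_neg_smul_apply_of_pow_sub_apply_eq_zero (T : E →L[ℂ] E) {μ : ℂ} {k : ℕ} {w : E}
    (hw : ((T - μ • 1) ^ k) w = 0) (t : ℝ) :
    exp (-(t • T)) w = ∑ j ∈ range k,
      ((t : ℂ) ^ j * Complex.exp (-(t * μ)) * ((-1) ^ j * (j.factorial : ℂ)⁻¹)) •
        ((T - μ • 1) ^ j) w := by
  have hsplit : -(t • T) = algebraMap ℂ _ (-(t * μ)) + (-(t : ℂ)) • (T - μ • 1) := by
    rw [Algebra.algebraMap_eq_smul_one, ← Complex.coe_smul]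
    module
  have hball (X : E →L[ℂ] E) : X ∈ Metric.eball 0 (expSeries ℂ (E →L[ℂ] E)).radius := by
    simp [expSeries_radius_eq_top]
  rw [hsplit, exp_add_of_commute_of_mem_ball (Algebra.commutes _ _) (hball _) (hball _),
    ← algebraMap_exp_comm, mul_apply_eq_comp,
    exp_apply_eq_sum_of_pow_apply_eq_zero _ (by rw [smul_pow, _root_.smul_apply, hw, smul_zero]),
    Algebra.algebraMap_eq_smul_one, _root_.smul_apply, one_apply_eq_self, smul_sum]
  refine sum_congr rfl fun j _ => ?_
  rw [smul_pow, _root_.smul_apply, smul_smul, smul_smul, ← Complex.exp_eq_exp_ℂ]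
  congr 1
  ring

theorem tendsto_exp_neg_smul_apply_of_mem_maxGenEigenspace (T : E →L[ℂ] E) {μ : ℂ}
    (hμ : 0 < μ.re) {w : E} (hw : w ∈ Module.End.maxGenEigenspace (T : E →ₗ[ℂ] E) μ) :
    Tendsto (fun t : ℝ => exp (-(t • T)) w) atTop (𝓝 0) := by
  obtain ⟨k, hk⟩ := (Module.End.mem_maxGenEigenspace _ _ _).mp hw
  have hk' : ((T - μ • 1) ^ k) w = 0 := by
    rw [← ContinuousLinearMap.coe_coe, ContinuousLinearMap.toLinearMap_pow]
    exact hk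
  simp_rw [exp_neg_smul_apply_of_pow_sub_apply_eq_zero T hk']
  simpa using tendsto_finsetSum _ fun j _ =>
    ((tendsto_pow_mul_cexp_neg_mul_atTop_nhds_zero hμ j).mul_const _).smul_const
      (((T - μ • 1) ^ j) w)

theorem hasDerivAt_exp_neg_smul_apply (T : E →L[ℂ] E) (z : E) (t : ℝ) :
    HasDerivAt (fun s : ℝ => exp (-(s • T)) z) (-T (exp (-(t • T)) z)) t := by
  simp_rw [← smul_neg]
  exact ((ContinuousLinearMap.apply ℂ E z).restrictScalars ℝ).hasFDerivAt.comp_hasDerivAt t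
    (hasDerivAt_exp_smul_const' (-T) t)

theorem eq_exp_neg_smul_apply_of_hasDerivAt (T : E →L[ℂ] E) {ξ : ℝ → E}
    (hξ : ∀ t, HasDerivAt ξ (-T (ξ t)) t) : ξ = fun t => exp (-(t • T)) (ξ 0) :=
  ODE_solution_unique_univ (v := fun _ => -T) (s := fun _ => Set.univ) (t₀ := 0)
    (fun _ => (-T).lipschitz.lipschitzOnWith)
    (fun t => ⟨hξ t, trivial⟩)
    (fun t => ⟨hasDerivAt_exp_neg_smul_apply T _ t, trivial⟩)
    (by simp)

end Exponential

section FiniteDimensional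

variable {E : Type*} [NormedAddCommGroup E] [NormedSpace ℂ E] [FiniteDimensional ℂ E]

theorem tendsto_exp_neg_smul_apply (T : E →L[ℂ] E)
    (hT : ∀ μ, Module.End.HasEigenvalue (T : E →ₗ[ℂ] E) μ → 0 < μ.re) (z : E) :
    Tendsto (fun t : ℝ => exp (-(t • T)) z) atTop (𝓝 0) := by
  have := FiniteDimensional.complete ℂ E
  have hz : z ∈ ⨆ μ, Module.End.maxGenEigenspace (T : E →ₗ[ℂ] E) μ := by
    rw [Module.End.iSup_maxGenEigenspace_eq_top]
    trivial
  refine Submodule.iSup_induction _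
    (motive := fun w => Tendsto (fun t : ℝ => exp (-(t • T)) w) atTop (𝓝 0)) hz
    (fun μ w hw => ?_) (by simp) fun w₁ w₂ h₁ h₂ => by simpa using h₁.add h₂
  obtain rfl | hw0 := eq_or_ne w 0
  · simp
  obtain ⟨k, hk⟩ := (Module.End.mem_maxGenEigenspace _ _ _).mp hw
  refine tendsto_exp_neg_smul_apply_of_mem_maxGenEigenspace T (hT μ ?_) hw
  exact Module.End.hasEigenvalue_of_hasGenEigenvalue (k := k)
    ((Submodule.ne_bot_iff _).mpr ⟨w, Module.End.mem_genEigenspace_nat.mpr hk, hw0⟩)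

theorem tendsto_zero_of_hasDerivAt_neg_apply (T : E →L[ℂ] E)
    (hT : ∀ μ, Module.End.HasEigenvalue (T : E →ₗ[ℂ] E) μ → 0 < μ.re) {ξ : ℝ → E}
    (hξ : ∀ t, HasDerivAt ξ (-T (ξ t)) t) : Tendsto ξ atTop (𝓝 0) := by
  have := FiniteDimensional.complete ℂ E
  rw [eq_exp_neg_smul_apply_of_hasDerivAt T hξ]
  exact tendsto_exp_neg_smul_apply T hT _

end FiniteDimensional

namespace Matrix

variable {ι : Type*} [Fintype ι] [DecidableEq ι]

theorem tendsto_zero_of_hasDerivAt_neg_mulVec (L : Matrix ι ι ℝ)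
    (hL : ∀ μ : ℂ, Module.End.HasEigenvalue (toLin' (L.map (↑))) μ → 0 < μ.re)
    {x : ℝ → ι → ℝ} (hx : ∀ t, HasDerivAt x (-(L *ᵥ x t)) t) :
    Tendsto x atTop (𝓝 0) := by
  set T : (ι → ℂ) →L[ℂ] (ι → ℂ) := LinearMap.toContinuousLinearMap (toLin' (L.map (↑)))
  have hξ (t : ℝ) : HasDerivAt (fun s k => (x s k : ℂ)) (-T fun k => (x t k : ℂ)) t := by
    refine hasDerivAt_pi.mpr fun k => ?_
    refine (hasDerivAt_pi.mp (hx t) k).ofReal_comp.congr_deriv ?_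
    simp only [T, Pi.neg_apply, Complex.ofReal_neg, LinearMap.coe_toContinuousLinearMap',
      toLin'_apply]
    exact congrArg Neg.neg (RingHom.map_mulVec Complex.ofRealHom L (x t) k)
  have hre : Continuous fun w : ι → ℂ => fun k => (w k).re := by fun_prop
  simpa [Function.comp_def, ← Pi.zero_def] using
    (hre.tendsto 0).comp (tendsto_zero_of_hasDerivAt_neg_apply T hL hξ)

def IsSignedLaplacian (L : Matrix ι ι ℝ) : Prop :=
  ∀ i, L i i = ∑ j, if j ≠ i then |L i j| else 0

namespace IsSignedLaplacian

variable {L : Matrix ι ι ℝ}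

theorem diag_eq_sum_erase (hL : L.IsSignedLaplacian) (i : ι) :
    L i i = ∑ j ∈ univ.erase i, |L i j| := by
  rw [hL i, ← sum_filter]
  congr 1
  ext j
  simp

theorem eq_zero_or_re_pos (hL : L.IsSignedLaplacian) {μ : ℂ}
    (hμ : Module.End.HasEigenvalue (toLin' (L.map (↑))) μ) : μ = 0 ∨ 0 < μ.re := by
  obtain ⟨k, hk⟩ := eigenvalue_mem_ball hμ
  have hdisc : ‖μ - L k k‖ ≤ L k k := by
    rw [Metric.mem_closedBall, dist_eq_norm] at hk
    simpa only [map_apply, Complex.norm_real, Real.norm_eq_abs, ← hL.diag_eq_sum_erase] using hk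
  have hdiag : 0 ≤ L k k := (norm_nonneg _).trans hdisc
  have hsq : (μ.re - L k k) ^ 2 + μ.im ^ 2 ≤ L k k ^ 2 := by
    have := pow_le_pow_left₀ (norm_nonneg _) hdisc 2
    rwa [Complex.sq_norm, Complex.normSq_apply, ← sq, ← sq, Complex.sub_re, Complex.sub_im,
      Complex.ofReal_re, Complex.ofReal_im, sub_zero] at this
  by_contra! h
  have hre : μ.re = 0 := by nlinarith [sq_nonneg μ.im]
  have him : μ.im = 0 := by nlinarith
  exact h.1 (Complex.ext hre him)

theorem mul_apply_eq_neg_abs_mul_of_forall_abs_le (hL : L.IsSignedLaplacian) {v : ι → ℝ}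
    (hv : L *ᵥ v = 0) {i : ι} (hi : ∀ k, |v k| ≤ |v i|) {j : ι} (hji : j ≠ i) :
    L i j * v j = -(|L i j| * v i) := by
  have hrow : ∑ k ∈ univ.erase i, -(L i k * v k * v i) =
      ∑ k ∈ univ.erase i, |L i k| * (v i * v i) := by
    have h := congrFun hv i
    rw [mulVec, dotProduct, ← add_sum_erase _ _ (mem_univ i), Pi.zero_apply] at h
    rw [← sum_mul, ← hL.diag_eq_sum_erase, sum_neg_distrib, ← sum_mul]
    linear_combination (-v i) * h
  have hle : ∀ k ∈ univ.erase i, -(L i k * v k * v i) ≤ |L i k| * (v i * v i) := fun k _ =>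
    calc -(L i k * v k * v i) ≤ |L i k| * (|v k| * |v i|) := by
          rw [← abs_mul, ← abs_mul, ← mul_assoc]; exact neg_le_abs _
      _ ≤ |L i k| * (|v i| * |v i|) := mul_le_mul_of_nonneg_left
          (mul_le_mul_of_nonneg_right (hi k) (abs_nonneg _)) (abs_nonneg _)
      _ = |L i k| * (v i * v i) := by rw [abs_mul_abs_self]
  have hj := (sum_eq_sum_iff_of_le hle).mp hrow j (mem_erase.mpr ⟨hji, mem_univ j⟩)
  obtain h0 | h0 := eq_or_ne (v i) 0
  · have : v j = 0 := abs_nonpos_iff.mp (by simpa [h0] using hi j)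
    simp [h0, this]
  · exact mul_right_cancel₀ h0 (by linear_combination -hj)

theorem abs_apply_eq_of_forall_abs_le (hL : L.IsSignedLaplacian) {v : ι → ℝ}
    (hv : L *ᵥ v = 0) {i : ι} (hi : ∀ k, |v k| ≤ |v i|) {j : ι} (hji : j ≠ i)
    (hij : L i j ≠ 0) : |v j| = |v i| := by
  have h := congrArg abs (hL.mul_apply_eq_neg_abs_mul_of_forall_abs_le hv hi hji)
  rw [abs_neg, abs_mul, abs_mul, abs_abs] at h
  exact mul_left_cancel₀ (abs_ne_zero.mpr hij) h

theorem abs_apply_eq_of_reflTransGen (hL : L.IsSignedLaplacian) {v : ι → ℝ}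
    (hv : L *ᵥ v = 0) {a b : ι} (hab : Relation.ReflTransGen (fun j i => i ≠ j ∧ L i j ≠ 0) a b)
    (hb : ∀ k, |v k| ≤ |v b|) : |v a| = |v b| := by
  induction hab with
  | refl => rfl
  | tail _ hcb ih =>
    have hc := hL.abs_apply_eq_of_forall_abs_le hv hb hcb.1.symm hcb.2
    exact (ih (hc ▸ hb)).trans hc

end IsSignedLaplacian

end Matrix

namespace Matrix.IsSignedLaplacian

variable {ι κ : Type*} [Fintype ι] [Fintype κ] [DecidableEq ι] [DecidableEq κ]
  {L : Matrix (ι ⊕ κ) (ι ⊕ κ) ℝ}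

theorem eq_zero_of_mulVec_eq_zero (hL : L.IsSignedLaplacian)
    (hirr : StronglyConnected (fun j i : ι => i ≠ j ∧ L (Sum.inl i) (Sum.inl j) ≠ 0))
    (htree : ∃ u : ι, ∀ v : ι ⊕ κ,
      Relation.ReflTransGen (fun j i => i ≠ j ∧ L i j ≠ 0) (Sum.inl u) v)
    (hUnbal : ¬ ∃ f : ι → Bool, ∀ i j, i ≠ j →
      L (Sum.inl i) (Sum.inl j) ≠ 0 → (f i = f j ↔ L (Sum.inl i) (Sum.inl j) < 0))
    {v : ι ⊕ κ → ℝ} (hv : L *ᵥ v = 0) : v = 0 := by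
  obtain ⟨u, hu⟩ := htree
  have : Nonempty (ι ⊕ κ) := ⟨Sum.inl u⟩
  obtain ⟨i₀, hi₀⟩ := Finite.exists_max fun k => |v k|
  have hroot (i : ι) : |v (Sum.inl i)| = |v i₀| := by
    refine hL.abs_apply_eq_of_reflTransGen hv (Relation.ReflTransGen.trans ?_ (hu i₀)) hi₀
    exact (hirr i u).lift Sum.inl fun a b hab => ⟨Sum.inl_injective.ne hab.1, hab.2⟩
  by_contra hv0
  have hmax : 0 < |v i₀| := by
    by_contra! h
    exact hv0 (funext fun k => abs_nonpos_iff.mp ((hi₀ k).trans h))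
  refine hUnbal ⟨fun i => decide (0 < v (Sum.inl i)), fun i j hij hLij => ?_⟩
  have hvi : v (Sum.inl i) ≠ 0 := abs_pos.mp (hroot i ▸ hmax)
  have hedge := hL.mul_apply_eq_neg_abs_mul_of_forall_abs_le hv (hroot i ▸ hi₀)
    (Sum.inl_injective.ne hij.symm)
  rcases hLij.lt_or_gt with hneg | hpos
  · rw [abs_of_neg hneg, neg_mul, neg_neg] at hedge
    simp [mul_left_cancel₀ hLij hedge, hneg]
  · rw [abs_of_pos hpos] at hedge
    have hvj : v (Sum.inl j) = -v (Sum.inl i) := mul_left_cancel₀ hLij (by linarith)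
    refine iff_of_false ?_ hpos.not_gt
    dsimp only
    rw [hvj, decide_eq_decide, neg_pos]
    rcases hvi.lt_or_gt with h | h
    · exact fun hiff => h.not_gt (hiff.mpr h)
    · exact fun hiff => h.not_gt (hiff.mp h)

theorem re_pos_of_hasEigenvalue (hL : L.IsSignedLaplacian)
    (hirr : StronglyConnected (fun j i : ι => i ≠ j ∧ L (Sum.inl i) (Sum.inl j) ≠ 0))
    (htree : ∃ u : ι, ∀ v : ι ⊕ κ,
      Relation.ReflTransGen (fun j i => i ≠ j ∧ L i j ≠ 0) (Sum.inl u) v)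
    (hUnbal : ¬ ∃ f : ι → Bool, ∀ i j, i ≠ j →
      L (Sum.inl i) (Sum.inl j) ≠ 0 → (f i = f j ↔ L (Sum.inl i) (Sum.inl j) < 0))
    {μ : ℂ} (hμ : Module.End.HasEigenvalue (toLin' (L.map (↑))) μ) : 0 < μ.re := by
  refine (hL.eq_zero_or_re_pos hμ).resolve_left ?_
  rintro rfl
  obtain ⟨w, hw, hw0⟩ := hμ.exists_hasEigenvector
  have hker : L.map (↑) *ᵥ w = 0 := by simpa using hw
  have hre : L *ᵥ (fun k => (w k).re) = 0 := by
    ext k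
    simpa [mulVec, dotProduct, Complex.re_sum] using congrArg Complex.re (congrFun hker k)
  have him : L *ᵥ (fun k => (w k).im) = 0 := by
    ext k
    simpa [mulVec, dotProduct, Complex.im_sum] using congrArg Complex.im (congrFun hker k)
  have hre0 := hL.eq_zero_of_mulVec_eq_zero hirr htree hUnbal hre
  have him0 := hL.eq_zero_of_mulVec_eq_zero hirr htree hUnbal him
  exact hw0 (funext fun k => Complex.ext (congrFun hre0 k) (congrFun him0 k))

end Matrix.IsSignedLaplacian

theorem stmt16_general {r m : ℕ}
    (L : Matrix (Fin r ⊕ Fin m) (Fin r ⊕ Fin m) ℝ)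
    -- L is a signed Laplacian: the diagonal entry is the sum of the absolute
    -- values of the off-diagonal entries of its row (l_ij = -a_ij for j ∈ N_i)
    (hlap : ∀ i, L i i = ∑ j, if j ≠ i then |L i j| else 0)
    -- L₁₁ irreducible: G(L₁₁) strongly connected
    (hirr : StronglyConnected (fun j i : Fin r =>
      i ≠ j ∧ L (Sum.inl i) (Sum.inl j) ≠ 0))
    -- G(L) contains a directed spanning tree (rooted in G(L₁₁))
    (htree : ∃ u : Fin r, ∀ v : Fin r ⊕ Fin m,
      Relation.ReflTransGen (fun j i => i ≠ j ∧ L i j ≠ 0) (Sum.inl u) v)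
    -- G(L₁₁) structurally unbalanced (edge sign = sgn(a_ij) = sgn(-l_ij))
    (hUnbal : ¬ ∃ f : Fin r → Bool, ∀ i j, i ≠ j →
      L (Sum.inl i) (Sum.inl j) ≠ 0 → (f i = f j ↔ L (Sum.inl i) (Sum.inl j) < 0)) :
    -- every solution of ẋ = -L x converges to zero
    ∀ x : ℝ → (Fin r ⊕ Fin m → ℝ),
      (∀ t, HasDerivAt x (-(L *ᵥ x t)) t) →
      Tendsto x atTop (nhds 0) := fun _ hx =>
  Matrix.tendsto_zero_of_hasDerivAt_neg_mulVec L
    (fun _ => IsSignedLaplacian.re_pos_of_hasEigenvalue hlap hirr htree hUnbal) hx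

theorem stmt16 {r m : ℕ}
    (L : Matrix (Fin r ⊕ Fin m) (Fin r ⊕ Fin m) ℝ)
    -- L is a signed Laplacian: the diagonal entry is the sum of the absolute
    -- values of the off-diagonal entries of its row (l_ij = -a_ij for j ∈ N_i)
    (hlap : ∀ i, L i i = ∑ j, if j ≠ i then |L i j| else 0)
    -- block lower-triangular form: L₁₂ = 0
    (hblock : ∀ (i : Fin r) (j : Fin m), L (Sum.inl i) (Sum.inr j) = 0)
    -- L₁₁ irreducible: G(L₁₁) strongly connected
    (hirr : StronglyConnected (fun j i : Fin r =>
      i ≠ j ∧ L (Sum.inl i) (Sum.inl j) ≠ 0))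
    -- G(L) contains a directed spanning tree (rooted in G(L₁₁))
    (htree : ∃ u : Fin r, ∀ v : Fin r ⊕ Fin m,
      Relation.ReflTransGen (fun j i => i ≠ j ∧ L i j ≠ 0) (Sum.inl u) v)
    -- G(L₁₁) structurally unbalanced (edge sign = sgn(a_ij) = sgn(-l_ij))
    (hUnbal : ¬ ∃ f : Fin r → Bool, ∀ i j, i ≠ j →
      L (Sum.inl i) (Sum.inl j) ≠ 0 → (f i = f j ↔ L (Sum.inl i) (Sum.inl j) < 0)) :
    -- every solution of ẋ = -L x converges to zero
    ∀ x : ℝ → (Fin r ⊕ Fin m → ℝ),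
      (∀ t, HasDerivAt x (-(L *ᵥ x t)) t) →
      Tendsto x atTop (nhds 0) :=
  stmt16_general L hlap hirr htree hUnbal
end

section
/- Let L be the signed Laplacian of a strongly connected signed graph G(L) that is structurally balanced with at least one negative edge, with bipartition V₁, V₂. Let D be the diagonal matrix with entries +1 on V₁ and −1 on V₂. Then DLD is the ordinary (nonnegative-weight) Laplacian of a strongly connected digraph, and every solution of ẋ = −Lx converges to c·D𝟙 where c = ξᵀDx(0) and ξ is the normalized left null vector of DLD; in particular the system polarizes. -/
/-!
Conjugating by the gauge `D = diag(±1)` of the bipartition turns the balanced signed Laplacian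
into an ordinary Laplacian `M = D L D` (off-diagonal entries `-|l_ij|`, zero row sums) on the same
graph, and `y = D x` solves `ẏ = -M y`.

For such `M` the semigroup `exp (-t M) = e^{-tc} exp (t (c - M))` is nonnegative and
row-stochastic, and strong connectivity makes `exp (-M)` entrywise positive. Positivity forces a
left null vector of `M` to have constant sign (its positive part is again fixed by `exp (-M)`),
which yields `ξ`. Along solutions `ξ ⬝ᵥ y` is conserved, while the oscillation `max y - min y`
shrinks by the factor `1 - δ` over each unit of time, `δ` the least entry of `exp (-M)`; hence
`y → (ξ ⬝ᵥ y 0) • 𝟙`. Finally `ξ ⬝ᵥ D x₀` vanishes only on a hyperplane, a null set.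
-/

open Matrix Filter MeasureTheory

section Oscillation

variable {ι : Type*} [Fintype ι] [Nonempty ι]

noncomputable def osc (w : ι → ℝ) : ℝ := (⨆ i, w i) - ⨅ i, w i

lemma osc_nonneg (w : ι → ℝ) : 0 ≤ osc w :=
  sub_nonneg.2 (ciInf_le_ciSup (Finite.bddBelow_range w) (Finite.bddAbove_range w))

lemma dotProduct_mem_Icc {p : ι → ℝ} {δ : ℝ} (hδ : 0 ≤ δ) (hp : ∀ j, δ ≤ p j)
    (hsum : ∑ j, p j = 1) (w : ι → ℝ) :
    p ⬝ᵥ w ∈ Set.Icc ((⨅ i, w i) + δ * osc w) ((⨆ i, w i) - δ * osc w) := by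
  obtain ⟨jmin, hjmin⟩ := exists_eq_ciInf_of_finite (f := w)
  obtain ⟨jmax, hjmax⟩ := exists_eq_ciSup_of_finite (f := w)
  have hp0 : ∀ j, 0 ≤ p j := fun j => hδ.trans (hp j)
  have hlow : p ⬝ᵥ w - ⨅ i, w i = ∑ j, p j * (w j - ⨅ i, w i) := by
    simp only [dotProduct, mul_sub, Finset.sum_sub_distrib, ← Finset.sum_mul, hsum, one_mul]
  have hup : (⨆ i, w i) - p ⬝ᵥ w = ∑ j, p j * ((⨆ i, w i) - w j) := by
    simp only [dotProduct, mul_sub, Finset.sum_sub_distrib, ← Finset.sum_mul, hsum, one_mul]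
  have hmax : p jmax * (w jmax - ⨅ i, w i) ≤ ∑ j, p j * (w j - ⨅ i, w i) :=
    Finset.single_le_sum (fun j _ => mul_nonneg (hp0 j)
      (sub_nonneg.2 (ciInf_le (Finite.bddBelow_range w) j))) (Finset.mem_univ _)
  have hmin : p jmin * ((⨆ i, w i) - w jmin) ≤ ∑ j, p j * ((⨆ i, w i) - w j) :=
    Finset.single_le_sum (fun j _ => mul_nonneg (hp0 j)
      (sub_nonneg.2 (le_ciSup (Finite.bddAbove_range w) j))) (Finset.mem_univ _)
  rw [hjmax] at hmax
  rw [hjmin] at hmin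
  have h₁ := mul_le_mul_of_nonneg_right (hp jmax) (osc_nonneg w)
  have h₂ := mul_le_mul_of_nonneg_right (hp jmin) (osc_nonneg w)
  unfold osc at *
  constructor <;> linarith

lemma osc_mulVec_le {P : Matrix ι ι ℝ} {δ : ℝ} (hδ : 0 ≤ δ) (hP : ∀ i j, δ ≤ P i j)
    (hrow : ∀ i, ∑ j, P i j = 1) (w : ι → ℝ) : osc (P *ᵥ w) ≤ (1 - 2 * δ) * osc w := by
  have h i := dotProduct_mem_Icc hδ (hP i) (hrow i) w
  have hsup : ⨆ i, (P *ᵥ w) i ≤ (⨆ i, w i) - δ * osc w := ciSup_le fun i => (h i).2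
  have hinf : (⨅ i, w i) + δ * osc w ≤ ⨅ i, (P *ᵥ w) i := le_ciInf fun i => (h i).1
  unfold osc at hsup hinf ⊢
  linarith

lemma abs_sub_dotProduct_le_osc {ξ : ι → ℝ} (hξ : ∀ i, 0 ≤ ξ i) (hsum : ∑ i, ξ i = 1)
    (w : ι → ℝ) (i : ι) : |w i - ξ ⬝ᵥ w| ≤ osc w := by
  have h := dotProduct_mem_Icc le_rfl hξ hsum w
  simp only [zero_mul, add_zero, sub_zero] at h
  have h₁ := ciInf_le (Finite.bddBelow_range w) i
  have h₂ := le_ciSup (Finite.bddAbove_range w) i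
  rw [abs_sub_le_iff, osc]
  constructor <;> linarith [h.1, h.2]

end Oscillation

section Stochastic

variable {ι : Type*} [Fintype ι] {P : Matrix ι ι ℝ} {ξ : ι → ℝ}

lemma Matrix.vecMul_abs_eq_of_vecMul_eq (hP : ∀ i j, 0 ≤ P i j) (hrow : ∀ i, ∑ j, P i j = 1)
    (hξ : ξ ᵥ* P = ξ) : (fun i => |ξ i|) ᵥ* P = fun i => |ξ i| := by
  have hle : ∀ j, |ξ j| ≤ ∑ i, |ξ i| * P i j := fun j =>
    calc |ξ j| = |∑ i, ξ i * P i j| := by rw [← congrFun hξ j]; rfl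
      _ ≤ ∑ i, |ξ i * P i j| := Finset.abs_sum_le_sum_abs _ _
      _ = ∑ i, |ξ i| * P i j := by simp only [abs_mul, abs_of_nonneg (hP _ _)]
  have hsum : ∑ j, ∑ i, |ξ i| * P i j = ∑ j, |ξ j| := by
    rw [Finset.sum_comm]
    simp only [← Finset.mul_sum, hrow, mul_one]
  funext j
  exact ((Finset.sum_eq_sum_iff_of_le fun j _ => hle j).1 hsum.symm j (Finset.mem_univ j)).symm

lemma Matrix.nonneg_or_nonpos_of_vecMul_eq (hP : ∀ i j, 0 < P i j) (hrow : ∀ i, ∑ j, P i j = 1)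
    (hξ : ξ ᵥ* P = ξ) : (∀ i, 0 ≤ ξ i) ∨ ∀ i, ξ i ≤ 0 := by
  by_cases hpos : ∃ k, 0 < ξ k
  · obtain ⟨k, hk⟩ := hpos
    set u : ι → ℝ := fun i => |ξ i| + ξ i
    have hu : u ᵥ* P = u := by
      rw [show u = (fun i => |ξ i|) + ξ from rfl, add_vecMul,
        vecMul_abs_eq_of_vecMul_eq (fun i j => (hP i j).le) hrow hξ, hξ]
    refine Or.inl fun j => ?_
    have hu0 : ∀ i, 0 ≤ u i := fun i => by simp only [u]; linarith [neg_abs_le (ξ i)]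
    have hj : 0 < u j :=
      calc 0 < u k * P k j := mul_pos (by simp only [u]; linarith [abs_nonneg (ξ k)]) (hP k j)
        _ ≤ ∑ i, u i * P i j :=
          Finset.single_le_sum (fun i _ => mul_nonneg (hu0 i) (hP i j).le) (Finset.mem_univ k)
        _ = u j := congrFun hu j
    by_contra hneg
    simp only [u, abs_of_neg (not_le.1 hneg)] at hj
    linarith
  · push Not at hpos
    exact Or.inr hpos

end Stochastic

lemma Matrix.smul_one_sub_apply_nonneg {ι : Type*} [DecidableEq ι] {M : Matrix ι ι ℝ}
    (hoff : ∀ i j, i ≠ j → M i j ≤ 0) {c : ℝ} (hc : ∀ i, M i i ≤ c) (i j : ι) : 0 ≤ (c • 1 - M) i j := by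
  by_cases h : i = j
  · subst h
    simpa using hc i
  · simpa [one_apply_ne h] using hoff i j h

lemma tendsto_const_smul_one_of_abs_sub_le {ι : Type*} [Fintype ι] {y : ℝ → ι → ℝ}
    {c q C : ℝ} (hq0 : 0 ≤ q) (hq1 : q < 1) (h : ∀ t ≥ 0, ∀ i, |y t i - c| ≤ q ^ ⌊t⌋₊ * C) :
    Tendsto y atTop (nhds (c • 1)) := by
  have hbound : Tendsto (fun t : ℝ => q ^ ⌊t⌋₊ * C) atTop (nhds 0) := by
    simpa using ((tendsto_pow_atTop_nhds_zero_of_lt_one hq0 hq1).comp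
      tendsto_nat_floor_atTop).mul_const C
  refine tendsto_pi_nhds.2 fun i => ?_
  rw [Pi.smul_apply, Pi.one_apply, smul_eq_mul, mul_one, tendsto_iff_norm_sub_tendsto_zero]
  exact squeeze_zero' (Eventually.of_forall fun t => norm_nonneg _)
    ((eventually_ge_atTop 0).mono fun t ht => h t ht i) hbound

section MatrixExponential

open NormedSpace

attribute [local instance] Matrix.linftyOpNormedAddCommGroup Matrix.linftyOpNormedSpace
  Matrix.linftyOpNormedRing Matrix.linftyOpNormedAlgebra

variable {ι : Type*} [Fintype ι]

lemma Matrix.hasDerivAt_mulVec {A : ℝ → Matrix ι ι ℝ} {A' : Matrix ι ι ℝ} {y : ℝ → ι → ℝ}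
    {y' : ι → ℝ} {t : ℝ} (hA : HasDerivAt A A' t) (hy : HasDerivAt y y' t) :
    HasDerivAt (fun s => A s *ᵥ y s) (A t *ᵥ y' + A' *ᵥ y t) t :=
  let B : Matrix ι ι ℝ →L[ℝ] (ι → ℝ) →L[ℝ] ι → ℝ := LinearMap.toContinuousLinearMap
    (LinearMap.toContinuousLinearMap.toLinearMap ∘ₗ mulVecBilin ℝ ℝ)
  B.hasDerivAt_of_bilinear (fun _ => hA) fun _ => hy

variable [DecidableEq ι]

lemma Matrix.hasSum_exp_apply (A : Matrix ι ι ℝ) (i j : ι) :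
    HasSum (fun n => (n.factorial : ℝ)⁻¹ * (A ^ n) i j) (exp A i j) :=
  Pi.hasSum.1 (Pi.hasSum.1 (exp_series_hasSum_exp' (𝕂 := ℝ) A) i) j

lemma Matrix.exp_apply_nonneg {A : Matrix ι ι ℝ} (hA : ∀ i j, 0 ≤ A i j) (i j : ι) :
    0 ≤ exp A i j :=
  (hasSum_exp_apply A i j).nonneg fun n => mul_nonneg (by positivity) (pow_apply_nonneg hA n i j)

lemma Matrix.exp_apply_pos {A : Matrix ι ι ℝ} (hA : ∀ i j, 0 ≤ A i j) {i j : ι} {k : ℕ}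
    (hk : 0 < (A ^ k) i j) : 0 < exp A i j :=
  (mul_pos (by positivity) hk).trans_le <| le_hasSum (hasSum_exp_apply A i j) k
    fun n _ => mul_nonneg (by positivity) (pow_apply_nonneg hA n i j)

lemma Matrix.exp_mulVec_of_mulVec_eq_zero {B : Matrix ι ι ℝ} {v : ι → ℝ} (h : B *ᵥ v = 0) :
    exp B *ᵥ v = v := by
  funext i
  have hsum : HasSum (fun n => (n.factorial : ℝ)⁻¹ * (B ^ n *ᵥ v) i) ((exp B *ᵥ v) i) := by
    simpa only [mulVec, dotProduct, Finset.mul_sum, mul_assoc] using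
      hasSum_sum fun j _ => (hasSum_exp_apply B i j).mul_right (v j)
  refine (hsum.unique (hasSum_single 0 fun n hn => ?_)).trans (by simp)
  obtain ⟨m, rfl⟩ := Nat.exists_eq_succ_of_ne_zero hn
  rw [pow_succ, ← mulVec_mulVec, h, mulVec_zero, Pi.zero_apply, mul_zero]

lemma Matrix.vecMul_exp_of_vecMul_eq_zero {B : Matrix ι ι ℝ} {ξ : ι → ℝ} (h : ξ ᵥ* B = 0) :
    ξ ᵥ* exp B = ξ := by
  rw [← mulVec_transpose, ← exp_transpose]
  exact exp_mulVec_of_mulVec_eq_zero (by rwa [mulVec_transpose])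

lemma Matrix.eq_exp_mulVec_of_hasDerivAt (M : Matrix ι ι ℝ) {y : ℝ → ι → ℝ}
    (hy : ∀ t, HasDerivAt y (-(M *ᵥ y t)) t) (t : ℝ) : y t = exp (-(t • M)) *ᵥ y 0 := by
  have hderiv : ∀ s, HasDerivAt (fun s => exp (s • M) *ᵥ y s) 0 s := fun s => by
    have h := hasDerivAt_mulVec (hasDerivAt_exp_smul_const M s) (hy s)
    rwa [mulVec_neg, mulVec_mulVec, neg_add_cancel] at h
  have hconst := is_const_of_deriv_eq_zero (fun s => (hderiv s).differentiableAt)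
    (fun s => (hderiv s).deriv) t 0
  simp only [zero_smul, exp_zero, one_mulVec] at hconst
  rw [← hconst, mulVec_mulVec, ← exp_add_of_commute _ _ ((Commute.refl (t • M)).neg_left),
    neg_add_cancel, exp_zero, one_mulVec]

lemma Matrix.exp_neg_smul_eq (M : Matrix ι ι ℝ) (c t : ℝ) :
    exp (-(t • M)) = Real.exp (-(t * c)) • exp (t • (c • 1 - M)) := by
  have hsplit : -(t • M) = (-(t * c)) • (1 : Matrix ι ι ℝ) + t • (c • 1 - M) := by module
  have hscalar : exp ((-(t * c)) • (1 : Matrix ι ι ℝ)) = Real.exp (-(t * c)) • 1 := by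
    rw [← Algebra.algebraMap_eq_smul_one, ← Algebra.algebraMap_eq_smul_one, Real.exp_eq_exp_ℝ]
    exact (algebraMap_exp_comm _).symm
  rw [hsplit, exp_add_of_commute _ _ ((Commute.one_left _).smul_left _), hscalar, smul_one_mul]

lemma Matrix.exists_pow_apply_pos_of_reflTransGen {A : Matrix ι ι ℝ} (hA : ∀ i j, 0 ≤ A i j)
    {a b : ι} (h : Relation.ReflTransGen (fun j i => A i j ≠ 0) a b) : ∃ k, 0 < (A ^ k) b a := by
  induction h with
  | refl => exact ⟨0, by simp⟩
  | tail _ hbc ih =>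
    obtain ⟨k, hk⟩ := ih
    refine ⟨k + 1, ?_⟩
    rw [pow_succ', mul_apply]
    exact (mul_pos ((hA _ _).lt_of_ne' hbc) hk).trans_le (Finset.single_le_sum
      (fun x _ => mul_nonneg (hA _ x) (pow_apply_nonneg hA k x a)) (Finset.mem_univ _))

variable {M : Matrix ι ι ℝ}

lemma Matrix.exp_neg_smul_apply_nonneg (hoff : ∀ i j, i ≠ j → M i j ≤ 0) {t : ℝ} (ht : 0 ≤ t)
    (i j : ι) : 0 ≤ exp (-(t • M)) i j := by
  obtain ⟨c, hc⟩ := Finite.bddAbove_range fun i => M i i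
  have hA := smul_one_sub_apply_nonneg hoff fun i => hc ⟨i, rfl⟩
  rw [exp_neg_smul_eq M c t, smul_apply, smul_eq_mul]
  exact mul_nonneg (Real.exp_pos _).le
    (exp_apply_nonneg (fun i j => mul_nonneg ht (hA i j)) i j)

lemma Matrix.exp_neg_apply_pos (hoff : ∀ i j, i ≠ j → M i j ≤ 0)
    (hSC : StronglyConnected fun j i => i ≠ j ∧ M i j ≠ 0) (i j : ι) : 0 < exp (-M) i j := by
  obtain ⟨c, hc⟩ := Finite.bddAbove_range fun i => M i i
  have hA := smul_one_sub_apply_nonneg hoff fun i => hc ⟨i, rfl⟩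
  obtain ⟨k, hk⟩ := exists_pow_apply_pos_of_reflTransGen hA
    (Relation.ReflTransGen.mono (fun a b hab => by simpa [one_apply_ne hab.1] using hab.2) _ _
      (hSC j i))
  have h := exp_neg_smul_eq M c 1
  rw [one_smul, one_smul, one_mul] at h
  rw [h, smul_apply, smul_eq_mul]
  exact mul_pos (Real.exp_pos _) (exp_apply_pos hA hk)

lemma Matrix.sum_exp_neg_smul_apply (hrow : ∀ i, ∑ j, M i j = 0) (t : ℝ) (i : ι) :
    ∑ j, exp (-(t • M)) i j = 1 := by
  have hM : M *ᵥ 1 = 0 := funext fun i => by simpa [mulVec, dotProduct] using hrow i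
  have h := exp_mulVec_of_mulVec_eq_zero (B := -(t • M)) (v := 1)
    (by rw [neg_mulVec, smul_mulVec, hM, smul_zero, neg_zero])
  simpa [mulVec, dotProduct] using congrFun h i

lemma Matrix.exists_pos_le_exp_neg_apply [Nonempty ι] (hoff : ∀ i j, i ≠ j → M i j ≤ 0)
    (hrow : ∀ i, ∑ j, M i j = 0) (hSC : StronglyConnected fun j i => i ≠ j ∧ M i j ≠ 0) :
    ∃ δ, 0 < δ ∧ δ ≤ 1 ∧ ∀ i j, δ ≤ exp (-M) i j := by
  obtain ⟨p, hp⟩ := exists_eq_ciInf_of_finite (f := fun p : ι × ι => exp (-M) p.1 p.2)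
  have hrow1 := sum_exp_neg_smul_apply hrow 1 p.1
  rw [one_smul] at hrow1
  refine ⟨exp (-M) p.1 p.2, exp_neg_apply_pos hoff hSC _ _, ?_, fun i j => ?_⟩
  · refine hrow1 ▸ Finset.single_le_sum (fun j _ => ?_) (Finset.mem_univ p.2)
    simpa using exp_neg_smul_apply_nonneg hoff zero_le_one p.1 j
  · exact hp ▸ ciInf_le (Finite.bddBelow_range _) (i, j)

lemma Matrix.exists_nonneg_vecMul_eq_zero [Nonempty ι] (hoff : ∀ i j, i ≠ j → M i j ≤ 0)
    (hrow : ∀ i, ∑ j, M i j = 0) (hSC : StronglyConnected fun j i => i ≠ j ∧ M i j ≠ 0) :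
    ∃ ξ : ι → ℝ, (∀ i, 0 ≤ ξ i) ∧ ξ ᵥ* M = 0 ∧ ∑ i, ξ i = 1 := by
  have hM : M *ᵥ 1 = 0 := funext fun i => by simpa [mulVec, dotProduct] using hrow i
  obtain ⟨ξ₀, hξ₀, hξ₀M⟩ : ∃ ξ₀ : ι → ℝ, ξ₀ ≠ 0 ∧ Mᵀ *ᵥ ξ₀ = 0 :=
    exists_mulVec_eq_zero_iff.2 <| by
      rw [det_transpose]
      exact exists_mulVec_eq_zero_iff.1 ⟨1, one_ne_zero, hM⟩
  rw [mulVec_transpose] at hξ₀M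
  have hfix : ξ₀ ᵥ* exp (-M) = ξ₀ :=
    vecMul_exp_of_vecMul_eq_zero (by rw [vecMul_neg, hξ₀M, neg_zero])
  have hrow1 : ∀ i, ∑ j, exp (-M) i j = 1 := by
    simpa using sum_exp_neg_smul_apply hrow 1
  obtain ⟨η, hη, hηne, hηM⟩ : ∃ η : ι → ℝ, (∀ i, 0 ≤ η i) ∧ η ≠ 0 ∧ η ᵥ* M = 0 := by
    rcases nonneg_or_nonpos_of_vecMul_eq (exp_neg_apply_pos hoff hSC) hrow1 hfix with h | h
    · exact ⟨ξ₀, h, hξ₀, hξ₀M⟩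
    · refine ⟨-ξ₀, fun i => neg_nonneg.2 (h i), neg_ne_zero.2 hξ₀, ?_⟩
      rw [neg_vecMul, hξ₀M, neg_zero]
  have hpos : 0 < ∑ i, η i := by
    obtain ⟨i, hi⟩ := Function.ne_iff.1 hηne
    exact Finset.sum_pos' (fun i _ => hη i) ⟨i, Finset.mem_univ i, (hη i).lt_of_ne' hi⟩
  refine ⟨(∑ i, η i)⁻¹ • η, fun i => mul_nonneg (inv_nonneg.2 hpos.le) (hη i), ?_, ?_⟩
  · rw [smul_vecMul, hηM, smul_zero]
  · simp [← Finset.mul_sum, inv_mul_cancel₀ hpos.ne']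

theorem Matrix.tendsto_of_hasDerivAt_neg_mulVec [Nonempty ι] (hoff : ∀ i j, i ≠ j → M i j ≤ 0)
    (hrow : ∀ i, ∑ j, M i j = 0) (hSC : StronglyConnected fun j i => i ≠ j ∧ M i j ≠ 0)
    {ξ : ι → ℝ} (hξ : ∀ i, 0 ≤ ξ i) (hξM : ξ ᵥ* M = 0) (hξ1 : ∑ i, ξ i = 1)
    {y : ℝ → ι → ℝ} (hy : ∀ t, HasDerivAt y (-(M *ᵥ y t)) t) :
    Tendsto y atTop (nhds ((ξ ⬝ᵥ y 0) • 1)) := by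
  have hshift : ∀ s t, y (t + s) = exp (-(t • M)) *ᵥ y s := fun s t => by
    simpa using eq_exp_mulVec_of_hasDerivAt M (fun t => (hy (t + s)).comp_add_const t s) t
  have hconst : ∀ t, ξ ⬝ᵥ y t = ξ ⬝ᵥ y 0 := fun t => by
    rw [← add_zero t, hshift, dotProduct_mulVec,
      vecMul_exp_of_vecMul_eq_zero (by rw [vecMul_neg, vecMul_smul, hξM, smul_zero, neg_zero])]
  have hmono : ∀ s t, 0 ≤ t → osc (y (t + s)) ≤ osc (y s) := fun s t ht => by
    simpa [hshift] using osc_mulVec_le le_rfl (exp_neg_smul_apply_nonneg hoff ht)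
      (sum_exp_neg_smul_apply hrow t) (y s)
  obtain ⟨δ, hδ0, hδ1, hδ⟩ := exists_pos_le_exp_neg_apply hoff hrow hSC
  have hcontr : ∀ s, osc (y (1 + s)) ≤ (1 - δ) * osc (y s) := fun s => by
    rw [hshift, one_smul]
    have := osc_mulVec_le hδ0.le hδ (by simpa using sum_exp_neg_smul_apply hrow 1) (y s)
    linarith [mul_nonneg hδ0.le (osc_nonneg (y s))]
  have hgeo : ∀ n : ℕ, osc (y n) ≤ (1 - δ) ^ n * osc (y 0) := by
    intro n
    induction n with
    | zero => simp
    | succ n ih =>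
      calc osc (y ↑(n + 1)) = osc (y (1 + n)) := by push_cast; rw [add_comm]
        _ ≤ (1 - δ) * osc (y n) := hcontr n
        _ ≤ (1 - δ) * ((1 - δ) ^ n * osc (y 0)) := by gcongr
        _ = (1 - δ) ^ (n + 1) * osc (y 0) := by ring
  refine tendsto_const_smul_one_of_abs_sub_le (C := osc (y 0)) (sub_nonneg.2 hδ1) (by linarith)
    fun t ht i => ?_
  calc |y t i - ξ ⬝ᵥ y 0| = |y t i - ξ ⬝ᵥ y t| := by rw [hconst t]
    _ ≤ osc (y t) := abs_sub_dotProduct_le_osc hξ hξ1 _ i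
    _ ≤ osc (y ⌊t⌋₊) := by
      simpa using hmono ⌊t⌋₊ (t - ⌊t⌋₊) (sub_nonneg.2 (Nat.floor_le ht))
    _ ≤ (1 - δ) ^ ⌊t⌋₊ * osc (y 0) := hgeo _

end MatrixExponential

lemma ae_dotProduct_ne_zero {ι : Type*} [Fintype ι] {v : ι → ℝ} (hv : v ≠ 0) :
    ∀ᵐ x ∂volume, v ⬝ᵥ x ≠ 0 := by
  let φ : (ι → ℝ) →ₗ[ℝ] ℝ :=
    { toFun := (v ⬝ᵥ ·)
      map_add' := dotProduct_add v
      map_smul' := fun c x => dotProduct_smul c v x }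
  have hker : LinearMap.ker φ ≠ ⊤ := fun h =>
    hv (dotProduct_self_eq_zero.1 (LinearMap.mem_ker.1 (h ▸ Submodule.mem_top)))
  rw [ae_iff]
  exact measure_mono_null (fun x (hx : ¬v ⬝ᵥ x ≠ 0) => LinearMap.mem_ker.2 (not_not.1 hx))
    (Measure.addHaar_submodule volume _ hker)

lemma sign_mul_mul_sign_nonpos {ι : Type*} {L : Matrix ι ι ℝ} {f : ι → Bool}
    (hbal : ∀ i j, i ≠ j → L i j ≠ 0 → (f i = f j ↔ L i j < 0)) {i j : ι} (hij : i ≠ j) :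
    (if f i then 1 else -1) * L i j * (if f j then 1 else -1) ≤ 0 := by
  by_cases h0 : L i j = 0
  · simp [h0]
  have h := hbal i j hij h0
  cases hfi : f i <;> cases hfj : f j <;> simp [hfi, hfj] at h ⊢ <;> linarith

section Gauge

variable {ι : Type*} [Fintype ι] [DecidableEq ι] {L : Matrix ι ι ℝ} {d : ι → ℝ}

lemma Matrix.diagonal_mul_diagonal_self (hd : ∀ i, |d i| = 1) : diagonal d * diagonal d = 1 := by
  rw [diagonal_mul_diagonal, ← diagonal_one]
  exact congrArg diagonal (funext fun i => by rw [← abs_mul_abs_self, hd, mul_one])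

lemma Matrix.diagonal_mul_mul_diagonal_apply (d : ι → ℝ) (L : Matrix ι ι ℝ) (i j : ι) :
    (diagonal d * L * diagonal d) i j = d i * L i j * d j := by
  rw [mul_diagonal, diagonal_mul]

lemma Matrix.diagonal_mul_mul_diagonal_apply_self (hd : ∀ i, |d i| = 1) (i : ι) :
    (diagonal d * L * diagonal d) i i = L i i := by
  rw [diagonal_mul_mul_diagonal_apply, mul_comm (d i), mul_assoc, ← abs_mul_abs_self, hd, mul_one,
    mul_one]

lemma Matrix.diagonal_mul_mul_diagonal_apply_of_ne (hd : ∀ i, |d i| = 1)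
    (hbal : ∀ i j, i ≠ j → d i * L i j * d j ≤ 0) {i j : ι} (hij : i ≠ j) :
    (diagonal d * L * diagonal d) i j = -|L i j| := by
  have h := abs_of_nonpos (hbal i j hij)
  rw [abs_mul, abs_mul, hd, hd, one_mul, mul_one] at h
  rw [diagonal_mul_mul_diagonal_apply]
  linarith

lemma Matrix.sum_diagonal_mul_mul_diagonal_apply (hd : ∀ i, |d i| = 1)
    (hbal : ∀ i j, i ≠ j → d i * L i j * d j ≤ 0)
    (hlap : ∀ i, L i i = ∑ j, if j ≠ i then |L i j| else 0) (i : ι) :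
    ∑ j, (diagonal d * L * diagonal d) i j = 0 := by
  have hsplit : ∀ j, (diagonal d * L * diagonal d) i j
      = (if j = i then L i i else 0) - if j ≠ i then |L i j| else 0 := fun j => by
    by_cases h : j = i
    · subst h
      simp [diagonal_mul_mul_diagonal_apply_self hd]
    · simp [h, diagonal_mul_mul_diagonal_apply_of_ne hd hbal (Ne.symm h)]
  simp only [hsplit, Finset.sum_sub_distrib, Finset.sum_ite_eq', Finset.mem_univ, if_true, ← hlap,
    sub_self]

lemma Matrix.stronglyConnected_diagonal_mul_mul_diagonal (hd : ∀ i, |d i| = 1)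
    (hSC : StronglyConnected fun j i => i ≠ j ∧ L i j ≠ 0) :
    StronglyConnected fun j i => i ≠ j ∧ (diagonal d * L * diagonal d) i j ≠ 0 := by
  have hd0 : ∀ i, d i ≠ 0 := fun i h => by simpa [h] using hd i
  refine fun a b => Relation.ReflTransGen.mono (fun j i h => ⟨h.1, ?_⟩) _ _ (hSC a b)
  rw [diagonal_mul_mul_diagonal_apply]
  exact mul_ne_zero (mul_ne_zero (hd0 i) h.2) (hd0 j)

lemma Matrix.hasDerivAt_diagonal_mulVec (hd : ∀ i, |d i| = 1) {x : ℝ → ι → ℝ}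
    (hx : ∀ t, HasDerivAt x (-(L *ᵥ x t)) t) (t : ℝ) :
    HasDerivAt (fun t => diagonal d *ᵥ x t)
      (-((diagonal d * L * diagonal d) *ᵥ (diagonal d *ᵥ x t))) t := by
  rw [mulVec_mulVec, mul_assoc, diagonal_mul_diagonal_self hd, mul_one, ← mulVec_mulVec,
    ← mulVec_neg]
  exact (mulVecLin (diagonal d)).toContinuousLinearMap.hasFDerivAt.comp_hasDerivAt t (hx t)

end Gauge

theorem stmt17 {N : ℕ} (L : Matrix (Fin N) (Fin N) ℝ)
    -- L is a signed Laplacian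
    (hlap : ∀ i, L i i = ∑ j, if j ≠ i then |L i j| else 0)
    -- G(L) strongly connected
    (hSC : StronglyConnected (fun j i : Fin N => i ≠ j ∧ L i j ≠ 0))
    -- structurally balanced with bipartition f (edge sign = sgn(-l_ij))
    (f : Fin N → Bool)
    (hbal : ∀ i j, i ≠ j → L i j ≠ 0 → (f i = f j ↔ L i j < 0))
    -- at least one negative edge
    (hneg : ∃ i j, i ≠ j ∧ 0 < L i j) :
    -- D L D is an ordinary Laplacian of a strongly connected digraph
    (∀ i j, i ≠ j →
      (Matrix.diagonal (fun i : Fin N => if f i then (1 : ℝ) else -1) * L *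
        Matrix.diagonal (fun i : Fin N => if f i then (1 : ℝ) else -1)) i j ≤ 0) ∧
    (∀ i, ∑ j,
      (Matrix.diagonal (fun i : Fin N => if f i then (1 : ℝ) else -1) * L *
        Matrix.diagonal (fun i : Fin N => if f i then (1 : ℝ) else -1)) i j = 0) ∧
    StronglyConnected (fun j i : Fin N => i ≠ j ∧
      (Matrix.diagonal (fun i : Fin N => if f i then (1 : ℝ) else -1) * L *
        Matrix.diagonal (fun i : Fin N => if f i then (1 : ℝ) else -1)) i j ≠ 0) ∧
    -- convergence of every solution of ẋ = -L x to c · D 𝟙, and polarization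
    ∃ ξ : Fin N → ℝ, (∀ i, 0 ≤ ξ i) ∧
      ξ ᵥ* (Matrix.diagonal (fun i : Fin N => if f i then (1 : ℝ) else -1) * L *
        Matrix.diagonal (fun i : Fin N => if f i then (1 : ℝ) else -1)) = 0 ∧
      ∑ i, ξ i = 1 ∧
      (∀ x : ℝ → (Fin N → ℝ), (∀ t, HasDerivAt x (-(L *ᵥ x t)) t) →
        Tendsto x atTop (nhds
          ((ξ ⬝ᵥ (Matrix.diagonal (fun i : Fin N => if f i then (1 : ℝ) else -1) *ᵥ x 0)) •
            (Matrix.diagonal (fun i : Fin N => if f i then (1 : ℝ) else -1) *ᵥ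
              fun _ => 1)))) ∧
      -- for almost all initial conditions the limit value is nonzero
      (∀ᵐ x0 : Fin N → ℝ ∂volume,
        ξ ⬝ᵥ (Matrix.diagonal (fun i : Fin N => if f i then (1 : ℝ) else -1) *ᵥ x0) ≠ 0) := by
  set d : Fin N → ℝ := fun i => if f i then 1 else -1
  obtain ⟨i₀, -⟩ := hneg
  have : Nonempty (Fin N) := ⟨i₀⟩
  have hd : ∀ i, |d i| = 1 := fun i => by by_cases h : f i <;> simp [d, h]
  have hDD := diagonal_mul_diagonal_self hd
  have hsign : ∀ i j, i ≠ j → d i * L i j * d j ≤ 0 := fun i j => sign_mul_mul_sign_nonpos hbal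
  have hoff : ∀ i j, i ≠ j → (diagonal d * L * diagonal d) i j ≤ 0 := fun i j hij =>
    (diagonal_mul_mul_diagonal_apply d L i j).trans_le (hsign i j hij)
  have hrow := sum_diagonal_mul_mul_diagonal_apply hd hsign hlap
  have hSC' := stronglyConnected_diagonal_mul_mul_diagonal hd hSC
  obtain ⟨ξ, hξ, hξM, hξ1⟩ := exists_nonneg_vecMul_eq_zero hoff hrow hSC'
  refine ⟨hoff, hrow, hSC', ξ, hξ, hξM, hξ1, fun x hx => ?_, ?_⟩
  · have hy := tendsto_of_hasDerivAt_neg_mulVec hoff hrow hSC' hξ hξM hξ1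
      (hasDerivAt_diagonal_mulVec hd hx)
    have hx' :=
      ((continuous_const (y := diagonal d)).matrix_mulVec continuous_id).tendsto _ |>.comp hy
    simp only [Function.comp_def, id_eq, mulVec_mulVec, hDD, one_mulVec, mulVec_smul] at hx'
    exact hx'
  · have hξ0 : ξ ≠ 0 := fun h => by simp [h] at hξ1
    have hξD : ξ ᵥ* diagonal d ≠ 0 := fun h =>
      hξ0 (by rw [← vecMul_one ξ, ← hDD, ← vecMul_vecMul, h, zero_vecMul])
    simpa only [dotProduct_mulVec] using ae_dotProduct_ne_zero hξD
end
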